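/- Let G = G₁ ∗_A G₂ be an amalgam with X = X₁ ∪ X₂, let (Γ, v₀) be a pointed graph well-labelled with X^±, let e be an edge of Γ with lab(e) ∈ X_j (j ∈ {1,2}), and let Γ' be the graph obtained from Γ by gluing a copy of the Cayley graph Cayley(G_j) along the edge e, i.e. by taking the disjoint union of Γ and Cayley(G_j) and identifying e with the edge f of Cayley(G_j) having ι(f) = 1_{G_j} and lab(f) ≡ lab(e). Then Lab(Γ, v₀) = Lab(Γ', v₀'), where v₀' is the vertex of Γ' corresponding to v₀. -/

import Mathlib

open Monoid

/-- A graph labelled with `X^±`: each edge carries a letter of `X` together with a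
sign (`true` for a positive letter `x`, `false` for `x⁻¹`), and there is a
fixed-point-free involution `bar` reversing edges and inverting labels. -/
structure LabeledGraph (X : Type) : Type 1 where
  V : Type
  E : Type
  bar : E → E
  ini : E → V
  lab : E → X × Bool
  bar_bar : ∀ e, bar (bar e) = e
  bar_ne : ∀ e, bar e ≠ e
  lab_bar : ∀ e, lab (bar e) = ((lab e).1, !(lab e).2)

namespace LabeledGraph

variable {X : Type} (Γ : LabeledGraph X)

/-- the terminal vertex of an edge -/
def ter (e : Γ.E) : Γ.V := Γ.ini (Γ.bar e)

/-- `Γ.IsPathFrom v w l` : the list of edges `l` forms a path from `v` to `w` in `Γ`. -/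
def IsPathFrom : Γ.V → Γ.V → List Γ.E → Prop
  | v, w, [] => v = w
  | v, w, e :: l => Γ.ini e = v ∧ IsPathFrom (Γ.ter e) w l

/-- a graph is well-labelled if edges with the same initial vertex and the same label coincide -/
def WellLabeled : Prop :=
  ∀ e₁ e₂ : Γ.E, Γ.ini e₁ = Γ.ini e₂ → Γ.lab e₁ = Γ.lab e₂ → e₁ = e₂

def Connected : Prop := ∀ v w : Γ.V, ∃ l, Γ.IsPathFrom v w l

/-- the word over `X^±` read along a list of edges -/
def word (l : List Γ.E) : List (X × Bool) := l.map Γ.lab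

/-- a path (list of edges) passes through a vertex -/
def PassesThrough (l : List Γ.E) (v : Γ.V) : Prop :=
  ∃ e ∈ l, Γ.ini e = v ∨ Γ.ter e = v

/-- the list of vertices visited by a path starting at `v` -/
def pathVertices (v : Γ.V) (l : List Γ.E) : List Γ.V := v :: l.map Γ.ter

/-- `v` is within graph distance `n` of `u` -/
def DistLe (n : ℕ) (u v : Γ.V) : Prop := ∃ l, Γ.IsPathFrom u v l ∧ l.length ≤ n

/-- a list of edges is freely reduced -/
def FreelyReduced (l : List Γ.E) : Prop := l.Chain' (fun e e' => e' ≠ Γ.bar e)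

end LabeledGraph

/-- evaluation in a group `G` of a word over `X^±`, via a map `g : X → G` -/
def wordVal {X G : Type} [Group G] (g : X → G) (w : List (X × Bool)) : G :=
  (w.map fun p => if p.2 then g p.1 else (g p.1)⁻¹).prod

namespace LabeledGraph

variable {X G : Type} [Group G] (g : X → G) (Γ : LabeledGraph X)

/-- the value in `G` of (the label of) a path -/
def pathVal (l : List Γ.E) : G := wordVal g (Γ.word l)

/-- `Lab(Γ, v₀)` : the set of values of labels of closed paths at `v₀` -/
def LabSet (v₀ : Γ.V) : Set G :=
  {x | ∃ l, Γ.IsPathFrom v₀ v₀ l ∧ Γ.pathVal g l = x}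

/-- a graph is `G`-based if every path whose label is trivial in `G` is closed -/
def IsGBased : Prop :=
  ∀ v w l, Γ.IsPathFrom v w l → Γ.pathVal g l = 1 → v = w

end LabeledGraph

/-- a morphism of labelled graphs -/
structure GraphHom {X : Type} (Γ Δ : LabeledGraph X) where
  fV : Γ.V → Δ.V
  fE : Γ.E → Δ.E
  map_ini : ∀ e, Δ.ini (fE e) = fV (Γ.ini e)
  map_bar : ∀ e, Δ.bar (fE e) = fE (Γ.bar e)
  map_lab : ∀ e, Δ.lab (fE e) = Γ.lab e

/-- the image of a morphism of labelled graphs, as a labelled graph -/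
def GraphHom.image {X : Type} {Γ Δ : LabeledGraph X} (ψ : GraphHom Γ Δ) :
    LabeledGraph X where
  V := Set.range ψ.fV
  E := Set.range ψ.fE
  bar e := ⟨Δ.bar e.1, by
    obtain ⟨a, ha⟩ := e.2
    exact ⟨Γ.bar a, by rw [← ψ.map_bar, ha]⟩⟩
  ini e := ⟨Δ.ini e.1, by
    obtain ⟨a, ha⟩ := e.2
    exact ⟨Γ.ini a, by rw [← ψ.map_ini, ha]⟩⟩
  lab e := Δ.lab e.1
  bar_bar e := Subtype.ext (Δ.bar_bar e.1)
  bar_ne e h := Δ.bar_ne e.1 (congrArg Subtype.val h)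
  lab_bar e := Δ.lab_bar e.1

/-- an isomorphism of pointed labelled graphs exists -/
def IsPointedIso {X : Type} (Γ Δ : LabeledGraph X) (v₀ : Γ.V) (w₀ : Δ.V) : Prop :=
  ∃ ψ : GraphHom Γ Δ, Function.Bijective ψ.fV ∧ Function.Bijective ψ.fE ∧ ψ.fV v₀ = w₀

/-- right multiplication by `g` on the set of right cosets of `H` -/
def cosMul {G : Type} [Group G] (H : Subgroup G) (g : G) :
    Quotient (QuotientGroup.rightRel H) → Quotient (QuotientGroup.rightRel H) :=
  Quotient.map (· * g) <| by
    intro a b hab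
    have hab' := (QuotientGroup.rightRel_apply).1 hab
    exact (QuotientGroup.rightRel_apply).2 (by simpa [mul_inv_rev, mul_assoc] using hab')

/-- the relative Cayley graph of `G` with respect to a subgroup `H`, with edges labelled
by letters from `Y` embedded into an alphabet `X` and evaluated in `G` via `val`. -/
def relCayley {G : Type} [Group G] (H : Subgroup G) {Y X : Type}
    (emb : Y → X) (val : Y → G) : LabeledGraph X where
  V := Quotient (QuotientGroup.rightRel H)
  E := Quotient (QuotientGroup.rightRel H) × (Y × Bool)
  bar e := (cosMul H (if e.2.2 then val e.2.1 else (val e.2.1)⁻¹) e.1, (e.2.1, !e.2.2))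
  ini e := e.1
  lab e := (emb e.2.1, e.2.2)
  bar_bar := by
    rintro ⟨v, y, b⟩
    induction v using Quotient.inductionOn with
    | h a => cases b <;> simp [cosMul, mul_assoc]
  bar_ne := by
    rintro ⟨v, y, b⟩ h
    have := congrArg (fun e => e.2.2) h
    simp at this
  lab_bar := by rintro ⟨v, y, b⟩; rfl
/-- `(Γ', v₀')` is obtained from `(Γ, v₀)` by a single Stallings folding: the
identification of a pair of distinct edges with the same initial vertex and the
same label. -/
def IsFoldingOf {X : Type} (Γ Γ' : LabeledGraph X) (v₀ : Γ.V) (v₀' : Γ'.V) : Prop :=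
  ∃ (π : GraphHom Γ Γ') (e₁ e₂ : Γ.E),
    e₁ ≠ e₂ ∧ Γ.ini e₁ = Γ.ini e₂ ∧ Γ.lab e₁ = Γ.lab e₂ ∧
    Function.Surjective π.fV ∧ Function.Surjective π.fE ∧
    π.fV v₀ = v₀' ∧ π.fE e₁ = π.fE e₂ ∧ π.fV (Γ.ter e₁) = π.fV (Γ.ter e₂) ∧
    (∀ a b : Γ.E, π.fE a = π.fE b →
      a = b ∨ ({a, b} : Set Γ.E) = {e₁, e₂} ∨ ({a, b} : Set Γ.E) = {Γ.bar e₁, Γ.bar e₂}) ∧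
    (∀ u v : Γ.V, π.fV u = π.fV v → u = v ∨ ({u, v} : Set Γ.V) = {Γ.ter e₁, Γ.ter e₂})

/-- `(Γ', v₀')` is obtained from `(Γ, v₀)` by cutting a single hair: the removal of an
edge (pair) whose terminal vertex has degree one. -/
def IsHairCutOf {X : Type} (Γ Γ' : LabeledGraph X) (v₀ : Γ.V) (v₀' : Γ'.V) : Prop :=
  ∃ (π : GraphHom Γ' Γ) (e : Γ.E),
    (∀ e' : Γ.E, Γ.ini e' = Γ.ter e → e' = Γ.bar e) ∧
    Function.Injective π.fV ∧ Function.Injective π.fE ∧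
    Set.range π.fV = {v | v ≠ Γ.ter e} ∧
    Set.range π.fE = {f | f ≠ e ∧ f ≠ Γ.bar e} ∧
    π.fV v₀' = v₀

/-- `(Γ', v₀')` is obtained from `(Γ, v₀)` by identifying the two distinct vertices
`v₁` and `v₂` into a single vertex (the edge sets being in natural bijection). -/
def IsEndpointIdentification {X : Type} (Γ Γ' : LabeledGraph X) (v₁ v₂ : Γ.V)
    (v₀ : Γ.V) (v₀' : Γ'.V) : Prop :=
  ∃ π : GraphHom Γ Γ', Function.Surjective π.fV ∧ Function.Bijective π.fE ∧
    π.fV v₀ = v₀' ∧ π.fV v₁ = π.fV v₂ ∧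
    ∀ u v : Γ.V, π.fV u = π.fV v → u = v ∨ ({u, v} : Set Γ.V) = {v₁, v₂}
namespace Amalgam

variable {X : Fin 2 → Type} {Gi : Fin 2 → Type} [∀ i, Group (Gi i)]
  {A : Type} [Group A] (φ : ∀ i, A →* Gi i) (gen : ∀ i, X i → Gi i)

/-- the combined alphabet `X = X₁ ⊔ X₂` (disjoint by construction) -/
abbrev Alpha (X : Fin 2 → Type) : Type := (i : Fin 2) × X i

/-- evaluation of the letters in the amalgam `G = G₁ ∗_A G₂` -/
def genG : Alpha X → PushoutI φ := fun a => PushoutI.of (φ := φ) a.1 (gen a.1 a.2)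

/-- the image of the amalgamated subgroup `A` in `G` -/
def Asub : Subgroup (PushoutI φ) := (PushoutI.base φ).range

variable (Γ : LabeledGraph (Alpha X))

/-- the color (`1` or `2`) of an edge -/
def colorE (e : Γ.E) : Fin 2 := (Γ.lab e).1.1

/-- one step between vertices along an edge of color `i` -/
def MonoStep (i : Fin 2) (u v : Γ.V) : Prop :=
  ∃ e : Γ.E, colorE Γ e = i ∧ Γ.ini e = u ∧ Γ.ter e = v

/-- reachability by paths of color `i` -/
def monoReach (i : Fin 2) : Γ.V → Γ.V → Prop := Relation.ReflTransGen (MonoStep Γ i)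

/-- the monochromatic component of an edge: all edges of the same color whose initial
vertex is monochromatically reachable from that of `e₀` -/
def monoComponent (e₀ : Γ.E) : Set Γ.E :=
  {e | colorE Γ e = colorE Γ e₀ ∧ monoReach Γ (colorE Γ e₀) (Γ.ini e₀) (Γ.ini e)}

/-- `C` is an `X_i`-monochromatic component of `Γ` -/
def IsMonoComponent (i : Fin 2) (C : Set Γ.E) : Prop :=
  ∃ e₀, colorE Γ e₀ = i ∧ C = monoComponent Γ e₀

/-- the vertex set of a set of edges -/
def VSet (C : Set Γ.E) : Set Γ.V := {v | ∃ e ∈ C, Γ.ini e = v}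

/-- a vertex is bichromatic if edges of both colors begin at it -/
def Bichromatic (v : Γ.V) : Prop :=
  (∃ e, Γ.ini e = v ∧ colorE Γ e = 0) ∧ (∃ e, Γ.ini e = v ∧ colorE Γ e = 1)

/-- the bichromatic vertices of a component -/
def VB (C : Set Γ.E) : Set Γ.V := {v ∈ VSet Γ C | Bichromatic Γ v}

/-- `Lab(C, u)` : values of labels of closed paths at `u` inside the edge set `C` -/
def LabSetIn (C : Set Γ.E) (u : Γ.V) : Set (PushoutI φ) :=
  {x | ∃ l, (∀ e ∈ l, e ∈ C) ∧ Γ.IsPathFrom u u l ∧ Γ.pathVal (genG φ gen) l = x}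

/-- the `A`-orbit of a vertex `ϑ` inside a monochromatic component `C` -/
def AOrbit (C : Set Γ.E) (ϑ : Γ.V) : Set Γ.V :=
  {v | ∃ l, (∀ e ∈ l, e ∈ C) ∧ Γ.IsPathFrom ϑ v l ∧ Γ.pathVal (genG φ gen) l ∈ Asub φ}

/-- `Γ` is `X_i^±`-saturated at `v` -/
def SaturatedAt (i : Fin 2) (v : Γ.V) : Prop :=
  ∀ (x : X i) (b : Bool), ∃ e : Γ.E, Γ.ini e = v ∧ Γ.lab e = (⟨i, x⟩, b)

/-- a (connected) precover of `G = G₁ ∗_A G₂` : a well-labelled `G`-based graph all of whose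
monochromatic components are covers of the corresponding free factor -/
def IsPrecover : Prop :=
  Γ.WellLabeled ∧ Γ.Connected ∧ Γ.IsGBased (genG φ gen) ∧
    ∀ i C, IsMonoComponent Γ i C → ∀ v ∈ VSet Γ C, SaturatedAt Γ i v

/-- a redundant monochromatic component of a pointed precover -/
def Redundant (v₀ : Γ.V) (i : Fin 2) (C : Set Γ.E) : Prop :=
  IsMonoComponent Γ i C ∧
    (((∀ j D, IsMonoComponent Γ j D → D = C) ∧ LabSetIn φ gen Γ C v₀ = {1}) ∨
      ((∃ j D, IsMonoComponent Γ j D ∧ D ≠ C) ∧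
        (∀ ϑ ∈ VB Γ C, LabSetIn φ gen Γ C ϑ ⊆ (Asub φ : Set (PushoutI φ)) ∧
          VB Γ C = AOrbit φ gen Γ C ϑ) ∧
        (v₀ ∉ VSet Γ C ∨ (v₀ ∈ VB Γ C ∧ LabSetIn φ gen Γ C v₀ = {1}))))

/-- a reduced precover -/
def IsReducedPrecover (v₀ : Γ.V) : Prop :=
  IsPrecover φ gen Γ ∧ (∀ i C, ¬ Redundant φ gen Γ v₀ i C) ∧
    ∀ i C, IsMonoComponent Γ i C → v₀ ∈ VSet Γ C →
      LabSetIn φ gen Γ C v₀ ∩ (Asub φ : Set (PushoutI φ)) ≠ {1} →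
      ∃ j D, j ≠ i ∧ IsMonoComponent Γ j D ∧ v₀ ∈ VSet Γ D ∧
        LabSetIn φ gen Γ D v₀ ∩ (Asub φ : Set (PushoutI φ)) =
          LabSetIn φ gen Γ C v₀ ∩ (Asub φ : Set (PushoutI φ))

/-- a decomposition into monochromatic blocks witnessing a word in normal form:
each block is nonempty and monochromatic, consecutive blocks have different colors,
each syllable is nontrivial, and if there is more than one syllable then no syllable
lies in (the image of) `A` -/
def NormalParts (parts : List (Fin 2 × List (Alpha X × Bool))) : Prop :=
  parts ≠ [] ∧
    (∀ p ∈ parts, p.2 ≠ [] ∧ ∀ a ∈ p.2, a.1.1 = p.1) ∧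
    parts.Chain' (fun p q => p.1 ≠ q.1) ∧
    (∀ p ∈ parts, wordVal (genG φ gen) p.2 ≠ 1) ∧
    (parts.length ≠ 1 → ∀ p ∈ parts, wordVal (genG φ gen) p.2 ∉ Asub φ)

/-- a word over `X^±` is in normal form -/
def IsNormalWord (w : List (Alpha X × Bool)) : Prop :=
  ∃ parts, NormalParts φ gen parts ∧ w = (parts.map Prod.snd).flatten

/-- a normal path from `v` to `w` : a path whose label is a word in normal form -/
def IsNormalPathFrom (v w : Γ.V) (l : List Γ.E) : Prop :=
  Γ.IsPathFrom v w l ∧ IsNormalWord φ gen (Γ.word l)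

/-- the relative Cayley graph `Cayley(G, H)` of the amalgam -/
def cayleyGraph (H : Subgroup (PushoutI φ)) : LabeledGraph (Alpha X) :=
  relCayley H (id : Alpha X → Alpha X) (genG φ gen)

/-- the basepoint `H · 1` of `Cayley(G, H)` -/
def cayleyBase (H : Subgroup (PushoutI φ)) : (cayleyGraph φ gen H).V :=
  Quotient.mk (QuotientGroup.rightRel H) 1

/-- an essential vertex of `Cayley(G, H)` : one through which a normal path closed at the
basepoint passes -/
def Essential (H : Subgroup (PushoutI φ)) (v : (cayleyGraph φ gen H).V) : Prop :=
  ∃ l, IsNormalPathFrom φ gen (cayleyGraph φ gen H) (cayleyBase φ gen H) (cayleyBase φ gen H) l ∧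
    (cayleyGraph φ gen H).PassesThrough l v

/-- the vertices of the normal core: the basepoint together with the essential vertices -/
def CoreV (H : Subgroup (PushoutI φ)) (v : (cayleyGraph φ gen H).V) : Prop :=
  v = cayleyBase φ gen H ∨ Essential φ gen H v

/-- the normal core of `Cayley(G, H)` : the restriction of `Cayley(G, H)` to the
essential vertices -/
def normalCore (H : Subgroup (PushoutI φ)) : LabeledGraph (Alpha X) where
  V := {v : (cayleyGraph φ gen H).V // CoreV φ gen H v}
  E := {e : (cayleyGraph φ gen H).E //
        CoreV φ gen H ((cayleyGraph φ gen H).ini e) ∧ CoreV φ gen H ((cayleyGraph φ gen H).ter e)}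
  bar e := ⟨(cayleyGraph φ gen H).bar e.1, by
    refine ⟨e.2.2, ?_⟩
    have : (cayleyGraph φ gen H).ter ((cayleyGraph φ gen H).bar e.1) = (cayleyGraph φ gen H).ini e.1 := by
      rw [LabeledGraph.ter, (cayleyGraph φ gen H).bar_bar]
    rw [this]
    exact e.2.1⟩
  ini e := ⟨(cayleyGraph φ gen H).ini e.1, e.2.1⟩
  lab e := (cayleyGraph φ gen H).lab e.1
  bar_bar e := Subtype.ext ((cayleyGraph φ gen H).bar_bar e.1)
  bar_ne e h := (cayleyGraph φ gen H).bar_ne e.1 (congrArg Subtype.val h)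
  lab_bar e := (cayleyGraph φ gen H).lab_bar e.1

/-- the basepoint of the normal core -/
def coreBase (H : Subgroup (PushoutI φ)) : (normalCore φ gen H).V :=
  ⟨cayleyBase φ gen H, Or.inl rfl⟩

/-- the relative Cayley graph of a free factor `G_j` with respect to a subgroup `L ≤ G_j`,
viewed as a graph labelled with `X^±` (using only letters of color `j`) -/
def cayleyFactor (j : Fin 2) (L : Subgroup (Gi j)) : LabeledGraph (Alpha X) :=
  relCayley L (fun x : X j => (⟨j, x⟩ : Alpha X)) (gen j)

/-- the diameter of the factor group `G_i` : the length of a longest geodesic in its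
Cayley graph, i.e. the least `n` such that every element is a product of at most `n`
generators and inverses -/
noncomputable def groupDiam (i : Fin 2) : ℕ :=
  sInf {n | ∀ h : Gi i, ∃ w : List (X i × Bool), wordVal (gen i) w = h ∧ w.length ≤ n}

end Amalgam

section Stmt19Aux

namespace LabeledGraph

variable {X : Type} (Γ : LabeledGraph X)

lemma ter_bar (e : Γ.E) : Γ.ter (Γ.bar e) = Γ.ini e := by
  simp [ter, Γ.bar_bar]

lemma isPathFrom_append {l₁ l₂ : List Γ.E} {v w : Γ.V} :
    Γ.IsPathFrom v w (l₁ ++ l₂) ↔ ∃ u, Γ.IsPathFrom v u l₁ ∧ Γ.IsPathFrom u w l₂ := by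
  induction l₁ generalizing v with
  | nil =>
    constructor
    · intro h; exact ⟨v, rfl, h⟩
    · rintro ⟨u, rfl, h⟩; exact h
  | cons a l ih =>
    constructor
    · rintro ⟨h1, h2⟩
      obtain ⟨u, hu1, hu2⟩ := ih.mp h2
      exact ⟨u, ⟨h1, hu1⟩, hu2⟩
    · rintro ⟨u, ⟨h1, hu1⟩, hu2⟩
      exact ⟨h1, ih.mpr ⟨u, hu1, hu2⟩⟩

lemma pathVal_nil {G : Type} [Group G] (g : X → G) : Γ.pathVal g [] = 1 := rfl

lemma pathVal_append {G : Type} [Group G] (g : X → G) (l₁ l₂ : List Γ.E) :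
    Γ.pathVal g (l₁ ++ l₂) = Γ.pathVal g l₁ * Γ.pathVal g l₂ := by
  simp [pathVal, word, wordVal]

lemma pathVal_singleton {G : Type} [Group G] (g : X → G) (a : Γ.E) :
    Γ.pathVal g [a] = if (Γ.lab a).2 then g (Γ.lab a).1 else (g (Γ.lab a).1)⁻¹ := by
  simp [pathVal, word, wordVal]

end LabeledGraph

namespace GraphHom

variable {X : Type} {Γ Δ : LabeledGraph X} (ψ : GraphHom Γ Δ)

lemma map_ter (a : Γ.E) : Δ.ter (ψ.fE a) = ψ.fV (Γ.ter a) := by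
  rw [LabeledGraph.ter, ψ.map_bar, ψ.map_ini]; rfl

lemma map_path {v w : Γ.V} {l : List Γ.E} (h : Γ.IsPathFrom v w l) :
    Δ.IsPathFrom (ψ.fV v) (ψ.fV w) (l.map ψ.fE) := by
  induction l generalizing v with
  | nil => exact congrArg ψ.fV h
  | cons a l ih =>
    obtain ⟨h1, h2⟩ := h
    refine ⟨by rw [ψ.map_ini, h1], ?_⟩
    rw [ψ.map_ter]
    exact ih h2

lemma pathVal_map {G : Type} [Group G] (g : X → G) (l : List Γ.E) :
    Δ.pathVal g (l.map ψ.fE) = Γ.pathVal g l := by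
  simp only [LabeledGraph.pathVal, LabeledGraph.word, List.map_map]
  congr 1
  exact List.map_congr_left fun a _ => ψ.map_lab a

end GraphHom

/-- representative map for the quotient by the trivial subgroup -/
def rep0 {H : Type} [Group H] : Quotient (QuotientGroup.rightRel (⊥ : Subgroup H)) → H :=
  Quotient.lift id fun a b h => by
    have hb := QuotientGroup.rightRel_apply.mp h
    rw [Subgroup.mem_bot, mul_inv_eq_one] at hb
    exact hb.symm

@[simp] lemma rep0_mk {H : Type} [Group H] (a : H) :
    rep0 (Quotient.mk (QuotientGroup.rightRel (⊥ : Subgroup H)) a) = a := rfl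

lemma rep0_cosMul {H : Type} [Group H] (g : H)
    (q : Quotient (QuotientGroup.rightRel (⊥ : Subgroup H))) :
    rep0 (cosMul (⊥ : Subgroup H) g q) = rep0 q * g := by
  induction q using Quotient.inductionOn with
  | h a => rfl

end Stmt19Aux

open Amalgam in
/-- Gluing a copy of the Cayley graph `Cayley(G_j)` onto a
well-labelled graph `(Γ, v₀)` along an edge `e` labelled by a (positive) letter of
`X_j` (identifying `e` with the edge of `Cayley(G_j)` starting at `1` with the same
label) does not change the determined subgroup `Lab(Γ, v₀)`. -/
theorem stmt_19
    {X : Fin 2 → Type} {Gi : Fin 2 → Type} [∀ i, Group (Gi i)] [∀ i, Finite (X i)]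
    {A : Type} [Group A] (φ : ∀ i, A →* Gi i) (gen : ∀ i, X i → Gi i)
    (hφ : ∀ i, Function.Injective (φ i))
    (hgen : ∀ i, Subgroup.closure (Set.range (gen i)) = ⊤)
    (Γ Γ' : LabeledGraph (Alpha X)) (v₀ : Γ.V)
    (hwl : Γ.WellLabeled) (j : Fin 2) (e : Γ.E) (x : X j)
    (he : Γ.lab e = (⟨j, x⟩, true))
    (f : (cayleyFactor gen j (⊥ : Subgroup (Gi j))).E)
    (hf : f = (Quotient.mk (QuotientGroup.rightRel (⊥ : Subgroup (Gi j))) 1, (x, true)))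
    (ψ₁ : GraphHom Γ Γ') (ψ₂ : GraphHom (cayleyFactor gen j (⊥ : Subgroup (Gi j))) Γ')
    (h1V : Function.Injective ψ₁.fV) (h1E : Function.Injective ψ₁.fE)
    (h2V : Function.Injective ψ₂.fV) (h2E : Function.Injective ψ₂.fE)
    (hEcover : ∀ e' : Γ'.E, (∃ a, ψ₁.fE a = e') ∨ (∃ b, ψ₂.fE b = e'))
    (hEident : ∀ a b, ψ₁.fE a = ψ₂.fE b ↔
      ((a = e ∧ b = f) ∨
        (a = Γ.bar e ∧ b = (cayleyFactor gen j (⊥ : Subgroup (Gi j))).bar f)))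
    (hVcover : ∀ v' : Γ'.V, (∃ u, ψ₁.fV u = v') ∨ (∃ w, ψ₂.fV w = v'))
    (hVident : ∀ u w, ψ₁.fV u = ψ₂.fV w ↔
      ((u = Γ.ini e ∧ w = (cayleyFactor gen j (⊥ : Subgroup (Gi j))).ini f) ∨
        (u = Γ.ter e ∧ w = (cayleyFactor gen j (⊥ : Subgroup (Gi j))).ter f))) :
    Γ.LabSet (genG φ gen) v₀ = Γ'.LabSet (genG φ gen) (ψ₁.fV v₀) := by
  classical
  -- basic facts about the glued edge of the Cayley graph
  have hrepini : rep0 ((cayleyFactor gen j (⊥ : Subgroup (Gi j))).ini f) = 1 := by rw [hf]; rfl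
  have hrepter : rep0 ((cayleyFactor gen j (⊥ : Subgroup (Gi j))).ter f) = gen j x := by
    rw [hf]
    show rep0 (cosMul (⊥ : Subgroup (Gi j))
      (if true then gen j x else (gen j x)⁻¹) (Quotient.mk _ 1)) = gen j x
    rw [rep0_cosMul]
    simp
  -- the key computation along an edge of the Cayley factor
  have hkey : ∀ b₀ : (cayleyFactor gen j (⊥ : Subgroup (Gi j))).E,
      PushoutI.of (φ := φ) j (rep0 ((cayleyFactor gen j (⊥ : Subgroup (Gi j))).ter b₀)) =
        PushoutI.of (φ := φ) j (rep0 ((cayleyFactor gen j (⊥ : Subgroup (Gi j))).ini b₀)) *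
          (if ((cayleyFactor gen j (⊥ : Subgroup (Gi j))).lab b₀).2 then (genG φ gen) ((cayleyFactor gen j (⊥ : Subgroup (Gi j))).lab b₀).1 else ((genG φ gen) ((cayleyFactor gen j (⊥ : Subgroup (Gi j))).lab b₀).1)⁻¹) := by
    rintro ⟨q, y, bb⟩
    show PushoutI.of (φ := φ) j
        (rep0 (cosMul (⊥ : Subgroup (Gi j)) (if bb then gen j y else (gen j y)⁻¹) q)) = _
    rw [rep0_cosMul, map_mul]
    cases bb <;> simp [genG, Amalgam.cayleyFactor, relCayley] <;> rfl
  -- the label of e, and of bar e, evaluated in G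
  have hev_e : (if (Γ.lab e).2 then (genG φ gen) (Γ.lab e).1 else ((genG φ gen) (Γ.lab e).1)⁻¹) =
      PushoutI.of (φ := φ) j (gen j x) := by
    rw [he]; simp [genG]
  have hev_bare : (if (Γ.lab (Γ.bar e)).2 then (genG φ gen) (Γ.lab (Γ.bar e)).1
      else ((genG φ gen) (Γ.lab (Γ.bar e)).1)⁻¹) = (PushoutI.of (φ := φ) j (gen j x))⁻¹ := by
    rw [Γ.lab_bar, he]; simp [genG]
  -- main induction: surgery on paths of Γ'
  have main : ∀ l : List Γ'.E, ∀ v' : Γ'.V, Γ'.IsPathFrom (ψ₁.fV v₀) v' l →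
      (∀ u, ψ₁.fV u = v' → ∃ m, Γ.IsPathFrom v₀ u m ∧ Γ.pathVal (genG φ gen) m = Γ'.pathVal (genG φ gen) l) ∧
      (∀ w, ψ₂.fV w = v' → ∃ m, Γ.IsPathFrom v₀ (Γ.ini e) m ∧
        Γ.pathVal (genG φ gen) m * PushoutI.of (φ := φ) j (rep0 w) = Γ'.pathVal (genG φ gen) l) := by
    intro l
    induction l using List.reverseRecOn with
    | nil =>
      intro v' h
      have h' : ψ₁.fV v₀ = v' := h
      constructor
      · intro u hu
        have : u = v₀ := h1V (hu.trans h'.symm)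
        subst this
        exact ⟨[], rfl, rfl⟩
      · intro w hw
        rcases (hVident v₀ w).mp (h'.symm ▸ hw.symm) with ⟨hv, hw'⟩ | ⟨hv, hw'⟩
        · subst hw'
          refine ⟨[], hv, ?_⟩
          rw [Γ.pathVal_nil, hrepini, map_one, one_mul]; rfl
        · subst hw'
          refine ⟨[Γ.bar e], ⟨?_, Γ.ter_bar e⟩, ?_⟩
          · exact hv.symm
          · rw [Γ.pathVal_singleton, hev_bare, hrepter, inv_mul_cancel]; rfl
    | append_singleton l a ih =>
      intro v' h
      obtain ⟨u', hl, ha⟩ := Γ'.isPathFrom_append.mp h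
      obtain ⟨ha1, ha2⟩ := ha
      have ha2' : Γ'.ter a = v' := ha2
      have hval : Γ'.pathVal (genG φ gen) (l ++ [a]) = Γ'.pathVal (genG φ gen) l *
          (if (Γ'.lab a).2 then (genG φ gen) (Γ'.lab a).1 else ((genG φ gen) (Γ'.lab a).1)⁻¹) := by
        rw [Γ'.pathVal_append, Γ'.pathVal_singleton]
      rcases hEcover a with ⟨a₀, rfl⟩ | ⟨b₀, rfl⟩
      · -- edge from Γ
        have hini : ψ₁.fV (Γ.ini a₀) = u' := (ψ₁.map_ini a₀).symm.trans ha1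
        have hterm : ψ₁.fV (Γ.ter a₀) = v' := (ψ₁.map_ter a₀).symm.trans ha2'
        obtain ⟨m, hm, hmv⟩ := (ih u' hl).1 (Γ.ini a₀) hini
        have hlab : Γ'.lab (ψ₁.fE a₀) = Γ.lab a₀ := ψ₁.map_lab a₀
        constructor
        · intro u hu
          have : u = Γ.ter a₀ := h1V (hu.trans hterm.symm)
          subst this
          refine ⟨m ++ [a₀], Γ.isPathFrom_append.mpr ⟨Γ.ini a₀, hm, rfl, rfl⟩, ?_⟩
          rw [Γ.pathVal_append, Γ.pathVal_singleton, hval, hmv, hlab]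
        · intro w hw
          rcases (hVident (Γ.ter a₀) w).mp (hterm.symm ▸ hw.symm) with ⟨hv, hw'⟩ | ⟨hv, hw'⟩
          · subst hw'
            refine ⟨m ++ [a₀], Γ.isPathFrom_append.mpr ⟨Γ.ini a₀, hm, rfl, hv⟩, ?_⟩
            rw [hrepini, map_one, mul_one, Γ.pathVal_append, Γ.pathVal_singleton,
              hval, hmv, hlab]
          · subst hw'
            refine ⟨m ++ [a₀, Γ.bar e],
              Γ.isPathFrom_append.mpr ⟨Γ.ini a₀, hm, rfl, ?_, Γ.ter_bar e⟩, ?_⟩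
            · exact hv.symm
            · have : Γ.pathVal (genG φ gen) [a₀, Γ.bar e] =
                  (if (Γ.lab a₀).2 then (genG φ gen) (Γ.lab a₀).1 else ((genG φ gen) (Γ.lab a₀).1)⁻¹) *
                  (PushoutI.of (φ := φ) j (gen j x))⁻¹ := by
                have : ([a₀, Γ.bar e] : List Γ.E) = [a₀] ++ [Γ.bar e] := rfl
                rw [this, Γ.pathVal_append, Γ.pathVal_singleton, Γ.pathVal_singleton,
                  hev_bare]
              rw [Γ.pathVal_append, this, hrepter, hval, hmv, hlab]
              group
        -- end of Γ-edge case
      · -- edge from the Cayley factor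
        have hini : ψ₂.fV ((cayleyFactor gen j (⊥ : Subgroup (Gi j))).ini b₀) = u' := (ψ₂.map_ini b₀).symm.trans ha1
        have hterm : ψ₂.fV ((cayleyFactor gen j (⊥ : Subgroup (Gi j))).ter b₀) = v' := (ψ₂.map_ter b₀).symm.trans ha2'
        obtain ⟨m, hm, hmv⟩ := (ih u' hl).2 ((cayleyFactor gen j (⊥ : Subgroup (Gi j))).ini b₀) hini
        have hlab : Γ'.lab (ψ₂.fE b₀) = (cayleyFactor gen j (⊥ : Subgroup (Gi j))).lab b₀ := ψ₂.map_lab b₀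
        have hstep : Γ.pathVal (genG φ gen) m * PushoutI.of (φ := φ) j (rep0 ((cayleyFactor gen j (⊥ : Subgroup (Gi j))).ter b₀)) =
            Γ'.pathVal (genG φ gen) (l ++ [ψ₂.fE b₀]) := by
          rw [hkey b₀, ← mul_assoc, hmv, hval, hlab]
        constructor
        · intro u hu
          rcases (hVident u ((cayleyFactor gen j (⊥ : Subgroup (Gi j))).ter b₀)).mp (hterm ▸ hu) with ⟨hu', hw'⟩ | ⟨hu', hw'⟩
          · subst hu'
            refine ⟨m, hm, ?_⟩
            rw [← hstep, hw', hrepini, map_one, mul_one]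
          · subst hu'
            refine ⟨m ++ [e], Γ.isPathFrom_append.mpr ⟨Γ.ini e, hm, rfl, rfl⟩, ?_⟩
            rw [Γ.pathVal_append, Γ.pathVal_singleton, hev_e, ← hstep, hw', hrepter]
        · intro w hw
          have : w = (cayleyFactor gen j (⊥ : Subgroup (Gi j))).ter b₀ := h2V (hw.trans hterm.symm)
          subst this
          exact ⟨m, hm, hstep⟩
  -- assemble the two inclusions
  ext z
  constructor
  · rintro ⟨l, hp, hv⟩
    exact ⟨l.map ψ₁.fE, ψ₁.map_path hp, by rw [ψ₁.pathVal_map]; exact hv⟩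
  · rintro ⟨l, hp, hv⟩
    obtain ⟨m, hm, hmv⟩ := (main l (ψ₁.fV v₀) hp).1 v₀ rfl
    exact ⟨m, hm, hmv.trans hv⟩
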